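/- arXiv:2402.17988 — 2 statements merged into one kernel-verified Lean document; each statement's English description precedes it below -/
import Mathlib

section
/- If L is a context-free language and R is a regular language, then the left quotient R \ L = { r | ∃ l ∈ R, l ++ r ∈ L } is context-free. -/
/-!
Fix a grammar `g` for `L` and a DFA `M` for `R`. The new grammar derives the part `r` of a word
`l ++ r` of `L` by following a derivation tree of `g` along the boundary between `l` and `r`:
its nonterminal `mid X p` stands for an `X`-subtree that straddles the boundary and is entered with
`M` in state `p`; a subtree to the left of the boundary becomes `pre X p q`, which derives only the
empty word and records that its yield takes `M` from `p` to `q`; a subtree to the right becomes a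
copy `suf X` of `X`. Both inclusions follow from the fact that the language of a grammar is the
least interpretation of its nonterminals that is closed under the rules.
-/

namespace ContextFreeGrammar

section Interpretation

variable {T N : Type*} (I : N → Language T)

def symbolLanguage : Symbol T N → Language T
  | .terminal a => {[a]}
  | .nonterminal X => I X

def formLanguage (α : List (Symbol T N)) : Language T := (α.map (symbolLanguage I)).prod

lemma formLanguage_cons (x : Symbol T N) (α : List (Symbol T N)) :
    formLanguage I (x :: α) = symbolLanguage I x * formLanguage I α := List.prod_cons

lemma formLanguage_append (α β : List (Symbol T N)) :
    formLanguage I (α ++ β) = formLanguage I α * formLanguage I β := by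
  simp [formLanguage]

@[simp] lemma formLanguage_singleton_nonterminal (X : N) :
    formLanguage I [.nonterminal X] = I X := by
  simp [formLanguage, symbolLanguage]

variable {I} in
lemma mem_formLanguage_cons {x : Symbol T N} {α : List (Symbol T N)} {w : List T} :
    w ∈ formLanguage I (x :: α) ↔
      ∃ u ∈ symbolLanguage I x, ∃ v ∈ formLanguage I α, u ++ v = w := by
  rw [formLanguage_cons, Language.mem_mul]

lemma mem_formLanguage_map_terminal (w : List T) : w ∈ formLanguage I (w.map .terminal) := by
  induction w with
  | nil => rfl
  | cons a w ih => exact mem_formLanguage_cons.2 ⟨[a], rfl, w, ih, rfl⟩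

end Interpretation

variable {T : Type*} {g : ContextFreeGrammar T}

def IsRuleClosed (g : ContextFreeGrammar T) (I : g.NT → Language T) : Prop :=
  ∀ r ∈ g.rules, formLanguage I r.output ≤ I r.input

lemma Derives.append {u v u' v' : List (Symbol T g.NT)} (h : g.Derives u v)
    (h' : g.Derives u' v') : g.Derives (u ++ u') (v ++ v') :=
  (h.append_right u').trans (h'.append_left v)

lemma Derives.nonterminal_of_mem_rules {r : ContextFreeRule T g.NT} (hr : r ∈ g.rules)
    {w : List (Symbol T g.NT)} (h : g.Derives r.output w) : g.Derives [.nonterminal r.input] w :=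
  Produces.trans_derives ⟨r, hr, ContextFreeRule.Rewrites.input_output⟩ h

namespace IsRuleClosed

variable {I : g.NT → Language T}

lemma formLanguage_le_of_produces (hI : g.IsRuleClosed I) {u v : List (Symbol T g.NT)}
    (h : g.Produces u v) :
    formLanguage I v ≤ formLanguage I u := by
  obtain ⟨r, hr, hrw⟩ := h
  obtain ⟨p, q, rfl, rfl⟩ := hrw.exists_parts
  simp only [formLanguage_append, formLanguage_singleton_nonterminal]
  exact mul_le_mul' (mul_le_mul' le_rfl (hI r hr)) le_rfl

lemma formLanguage_le_of_derives (hI : g.IsRuleClosed I) {u v : List (Symbol T g.NT)}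
    (h : g.Derives u v) :
    formLanguage I v ≤ formLanguage I u := by
  induction h with
  | refl => exact le_rfl
  | tail _ hp ih => exact (hI.formLanguage_le_of_produces hp).trans ih

lemma mem_of_derives (hI : g.IsRuleClosed I) {X : g.NT} {w : List T}
    (h : g.Derives [.nonterminal X] (w.map .terminal)) : w ∈ I X := by
  have hw := hI.formLanguage_le_of_derives h (mem_formLanguage_map_terminal I w)
  rwa [formLanguage_singleton_nonterminal] at hw

end IsRuleClosed

namespace LeftQuotient

inductive NT (N σ : Type) : Type
  | suf : N → NT N σ
  | pre : N → σ → σ → NT N σ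
  | mid : N → σ → NT N σ

variable {A N σ : Type}

def sufSymbol : Symbol A N → Symbol A (NT N σ)
  | .terminal a => .terminal a
  | .nonterminal X => .nonterminal (.suf X)

variable (M : DFA A σ)

-- `β` replaces a right-hand side `α` lying left of the boundary, whose yield takes `M` from `p`
-- to `q`; the boundary, reached in state `p`, lies inside `α` in `MidForm M p α β`.
inductive PrefixForm : σ → List (Symbol A N) → σ → List (Symbol A (NT N σ)) → Prop
  | nil (p : σ) : PrefixForm p [] p []
  | terminal {p q : σ} {a : A} {α β} :
      PrefixForm (M.step p a) α q β → PrefixForm p (.terminal a :: α) q β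
  | nonterminal {p s q : σ} {X : N} {α β} :
      PrefixForm s α q β →
        PrefixForm p (.nonterminal X :: α) q (.nonterminal (.pre X p s) :: β)

inductive MidForm : σ → List (Symbol A N) → List (Symbol A (NT N σ)) → Prop
  | suffix {p : σ} (α : List (Symbol A N)) : p ∈ M.accept → MidForm p α (α.map sufSymbol)
  | terminal {p : σ} {a : A} {α β} :
      MidForm (M.step p a) α β → MidForm p (.terminal a :: α) β
  | nonterminal {p s : σ} {X : N} {α β} :
      MidForm s α β → MidForm p (.nonterminal X :: α) (.nonterminal (.pre X p s) :: β)
  | split {p : σ} {X : N} {α : List (Symbol A N)} :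
      MidForm p (.nonterminal X :: α) (.nonterminal (.mid X p) :: α.map sufSymbol)

inductive IsRule : ContextFreeRule A N → ContextFreeRule A (NT N σ) → Prop
  | suf (r : ContextFreeRule A N) : IsRule r ⟨.suf r.input, r.output.map sufSymbol⟩
  | pre (r : ContextFreeRule A N) {p q : σ} {β} :
      PrefixForm M p r.output q β → IsRule r ⟨.pre r.input p q, β⟩
  | mid (r : ContextFreeRule A N) {p : σ} {β} :
      MidForm M p r.output β → IsRule r ⟨.mid r.input p, β⟩

variable {M} [Finite σ]

lemma finite_prefixForm (p : σ) (α : List (Symbol A N)) (q : σ) :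
    {β | PrefixForm M p α q β}.Finite := by
  induction α generalizing p with
  | nil => exact (Set.finite_singleton []).subset (by rintro β ⟨⟩; rfl)
  | cons x α ih =>
    cases x with
    | terminal a => exact (ih (M.step p a)).subset (by rintro β ⟨⟩; assumption)
    | nonterminal X =>
      refine (Set.finite_iUnion fun s => (ih s).image (.nonterminal (.pre X p s) :: ·)).subset ?_
      rintro _ ⟨⟩
      exact Set.mem_iUnion.2 ⟨_, _, by assumption, rfl⟩

lemma finite_midForm (p : σ) (α : List (Symbol A N)) : {β | MidForm M p α β}.Finite := by
  induction α generalizing p with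
  | nil => exact (Set.finite_singleton []).subset (by rintro β ⟨⟩; rfl)
  | cons x α ih =>
    cases x with
    | terminal a =>
      refine ((Set.finite_singleton ((.terminal a :: α).map sufSymbol)).union
        (ih (M.step p a))).subset ?_
      rintro _ ⟨⟩
      exacts [Or.inl rfl, Or.inr (by assumption)]
    | nonterminal X =>
      refine (((Set.finite_singleton ((.nonterminal X :: α).map sufSymbol)).union
        (Set.finite_singleton (.nonterminal (.mid X p) :: α.map sufSymbol))).union
        (Set.finite_iUnion fun s => (ih s).image (.nonterminal (.pre X p s) :: ·))).subset ?_
      rintro _ ⟨⟩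
      exacts [Or.inl (Or.inl rfl), Or.inr (Set.mem_iUnion.2 ⟨_, _, by assumption, rfl⟩),
        Or.inl (Or.inr rfl)]

lemma finite_isRule (r : ContextFreeRule A N) : {r' | IsRule M r r'}.Finite := by
  have hsub : {r' | IsRule M r r'} ⊆ {⟨.suf r.input, r.output.map sufSymbol⟩} ∪
      (⋃ p, ⋃ q, (⟨.pre r.input p q, ·⟩) '' {β | PrefixForm M p r.output q β}) ∪
      ⋃ p, (⟨.mid r.input p, ·⟩) '' {β | MidForm M p r.output β} := by
    rintro _ ⟨⟩ <;> simp [*]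
  refine (((Set.finite_singleton _).union ?_).union ?_).subset hsub
  · exact Set.finite_iUnion fun p => Set.finite_iUnion fun q => (finite_prefixForm p _ q).image _
  · exact Set.finite_iUnion fun p => (finite_midForm p _).image _

end LeftQuotient

open LeftQuotient

variable {A σ : Type}

noncomputable def leftQuotient [Finite σ] (g : ContextFreeGrammar A) (M : DFA A σ) :
    ContextFreeGrammar A where
  NT := LeftQuotient.NT g.NT σ
  initial := .mid g.initial M.start
  rules := (g.rules.finite_toSet.biUnion fun r _ => finite_isRule (M := M) r).toFinset

lemma mem_leftQuotient_rules [Finite σ] {g : ContextFreeGrammar A} {M : DFA A σ}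
    {r' : ContextFreeRule A (LeftQuotient.NT g.NT σ)} :
    r' ∈ (g.leftQuotient M).rules ↔ ∃ r ∈ g.rules, IsRule M r r' :=
  (Set.Finite.mem_toFinset _).trans (by simp)

namespace LeftQuotient

variable (g : ContextFreeGrammar A) (M : DFA A σ)

def intended : LeftQuotient.NT g.NT σ → Language A
  | .suf X => {w | g.Derives [.nonterminal X] (w.map .terminal)}
  | .pre X p q =>
      {w | w = [] ∧ ∃ v, g.Derives [.nonterminal X] (v.map .terminal) ∧ M.evalFrom p v = q}
  | .mid X p =>
      {w | ∃ l, g.Derives [.nonterminal X] ((l ++ w).map .terminal) ∧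
        M.evalFrom p l ∈ M.accept}

variable {g M}

lemma derives_of_mem_formLanguage_sufSymbol {α : List (Symbol A g.NT)} {w : List A}
    (hw : w ∈ formLanguage (intended g M) (α.map sufSymbol)) :
    g.Derives α (w.map .terminal) := by
  induction α generalizing w with
  | nil => obtain rfl : w = [] := hw; rfl
  | cons x α ih =>
    obtain ⟨u, hu, v, hv, rfl⟩ := mem_formLanguage_cons.1 hw
    rw [List.map_append]
    refine Derives.append (u := [x]) ?_ (ih hv)
    cases x with
    | terminal a => obtain rfl : u = [a] := hu; rfl
    | nonterminal X => exact hu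

lemma PrefixForm.sound {p q : σ} {α β} (h : PrefixForm M p α q β) {w : List A}
    (hw : w ∈ formLanguage (intended g M) β) :
    w = [] ∧ ∃ v, g.Derives α (v.map .terminal) ∧ M.evalFrom p v = q := by
  induction h generalizing w with
  | nil p => exact ⟨hw, [], .refl _, rfl⟩
  | @terminal p q a α β _ ih =>
    obtain ⟨rfl, v, hv, hq⟩ := ih hw
    exact ⟨rfl, a :: v, by simpa using hv.append_left [.terminal a], hq⟩
  | nonterminal _ ih =>
    obtain ⟨u, ⟨rfl, v₁, hv₁, hs⟩, w', hw', rfl⟩ := mem_formLanguage_cons.1 hw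
    obtain ⟨rfl, v₂, hv₂, hq⟩ := ih hw'
    exact ⟨rfl, v₁ ++ v₂, by simpa using hv₁.append hv₂,
      by rw [DFA.evalFrom_of_append, hs, hq]⟩

lemma MidForm.sound {p : σ} {α β} (h : MidForm M p α β) {w : List A}
    (hw : w ∈ formLanguage (intended g M) β) :
    ∃ l, g.Derives α ((l ++ w).map .terminal) ∧ M.evalFrom p l ∈ M.accept := by
  induction h generalizing w with
  | suffix α hp => exact ⟨[], derives_of_mem_formLanguage_sufSymbol hw, hp⟩
  | @terminal p a α β _ ih =>
    obtain ⟨l, hl, hacc⟩ := ih hw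
    exact ⟨a :: l, by simpa using hl.append_left [.terminal a], hacc⟩
  | nonterminal _ ih =>
    obtain ⟨u, ⟨rfl, v, hv, hs⟩, w', hw', rfl⟩ := mem_formLanguage_cons.1 hw
    obtain ⟨l, hl, hacc⟩ := ih hw'
    exact ⟨v ++ l, by simpa using hv.append hl, by rwa [DFA.evalFrom_of_append, hs]⟩
  | split =>
    obtain ⟨u, ⟨l, hl, hacc⟩, w', hw', rfl⟩ := mem_formLanguage_cons.1 hw
    exact ⟨l, by simpa using hl.append (derives_of_mem_formLanguage_sufSymbol hw'), hacc⟩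

variable [Finite σ]

lemma isRuleClosed_intended : (g.leftQuotient M).IsRuleClosed (intended g M) := by
  intro r' hr' w hw
  obtain ⟨r, hr, hrule⟩ := mem_leftQuotient_rules.1 hr'
  cases hrule with
  | suf => exact Derives.nonterminal_of_mem_rules hr (derives_of_mem_formLanguage_sufSymbol hw)
  | pre h =>
    obtain ⟨rfl, v, hv, hq⟩ := h.sound hw
    exact ⟨rfl, v, .nonterminal_of_mem_rules hr hv, hq⟩
  | mid h =>
    obtain ⟨l, hl, hacc⟩ := h.sound hw
    exact ⟨l, .nonterminal_of_mem_rules hr hl, hacc⟩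

variable (g M) in
def simulated (X : g.NT) : Language A :=
  {w | (g.leftQuotient M).Derives [.nonterminal (.suf X)] (w.map .terminal) ∧
    ∀ p, (g.leftQuotient M).Derives [.nonterminal (.pre X p (M.evalFrom p w))] [] ∧
      ∀ l u, w = l ++ u → M.evalFrom p l ∈ M.accept →
        (g.leftQuotient M).Derives [.nonterminal (.mid X p)] (u.map .terminal)}

lemma derives_sufSymbol_of_mem_formLanguage {α : List (Symbol A g.NT)} {w : List A}
    (hw : w ∈ formLanguage (simulated g M) α) :
    (g.leftQuotient M).Derives (α.map sufSymbol) (w.map .terminal) := by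
  induction α generalizing w with
  | nil => obtain rfl : w = [] := hw; rfl
  | cons x α ih =>
    obtain ⟨u, hu, v, hv, rfl⟩ := mem_formLanguage_cons.1 hw
    rw [List.map_append]
    refine Derives.append (u := [sufSymbol x]) ?_ (ih hv)
    cases x with
    | terminal a => obtain rfl : u = [a] := hu; rfl
    | nonterminal X => exact hu.1

lemma exists_prefixForm_derives_nil {α : List (Symbol A g.NT)} {w : List A}
    (hw : w ∈ formLanguage (simulated g M) α) (p : σ) :
    ∃ β, PrefixForm M p α (M.evalFrom p w) β ∧ (g.leftQuotient M).Derives β [] := by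
  induction α generalizing w p with
  | nil => obtain rfl : w = [] := hw; exact ⟨[], .nil p, .refl _⟩
  | cons x α ih =>
    obtain ⟨u, hu, v, hv, rfl⟩ := mem_formLanguage_cons.1 hw
    cases x with
    | terminal a =>
      obtain rfl : u = [a] := hu
      obtain ⟨β, hβ, hd⟩ := ih hv (M.step p a)
      exact ⟨β, .terminal hβ, hd⟩
    | nonterminal X =>
      obtain ⟨β, hβ, hd⟩ := ih hv (M.evalFrom p u)
      rw [DFA.evalFrom_of_append]
      exact ⟨_, .nonterminal hβ, (hu.2 p).1.append hd⟩

lemma exists_midForm_derives {α : List (Symbol A g.NT)} {l u : List A}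
    (hw : l ++ u ∈ formLanguage (simulated g M) α) {p : σ} (hl : M.evalFrom p l ∈ M.accept) :
    ∃ β, MidForm M p α β ∧ (g.leftQuotient M).Derives β (u.map .terminal) := by
  induction α generalizing l u p with
  | nil =>
    obtain ⟨rfl, rfl⟩ := List.append_eq_nil_iff.1 hw
    exact ⟨[], .suffix [] hl, .refl _⟩
  | cons x α ih =>
    obtain ⟨w₁, hw₁, w₂, hw₂, hsplit⟩ := mem_formLanguage_cons.1 hw
    cases x with
    | terminal a =>
      obtain rfl : w₁ = [a] := hw₁
      cases l with
      | nil => exact ⟨_, .suffix _ hl, derives_sufSymbol_of_mem_formLanguage hw⟩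
      | cons b l =>
        obtain ⟨rfl, rfl⟩ : a = b ∧ w₂ = l ++ u := by simpa using hsplit
        obtain ⟨β, hβ, hd⟩ := ih hw₂ hl
        exact ⟨β, .terminal hβ, hd⟩
    | nonterminal X =>
      rcases List.append_eq_append_iff.1 hsplit with ⟨m, rfl, rfl⟩ | ⟨m, rfl, rfl⟩
      · rw [DFA.evalFrom_of_append] at hl
        obtain ⟨β, hβ, hd⟩ := ih hw₂ hl
        exact ⟨_, .nonterminal hβ, (hw₁.2 p).1.append hd⟩
      · rw [List.map_append]
        exact ⟨_, .split,
          ((hw₁.2 p).2 l m rfl hl).append (derives_sufSymbol_of_mem_formLanguage hw₂)⟩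

lemma isRuleClosed_simulated : g.IsRuleClosed (simulated g M) := by
  intro r hr w hw
  refine ⟨.nonterminal_of_mem_rules (mem_leftQuotient_rules.2 ⟨r, hr, .suf r⟩)
    (derives_sufSymbol_of_mem_formLanguage hw), fun p => ⟨?_, ?_⟩⟩
  · obtain ⟨β, hβ, hd⟩ := exists_prefixForm_derives_nil hw p
    exact .nonterminal_of_mem_rules (mem_leftQuotient_rules.2 ⟨r, hr, .pre r hβ⟩) hd
  · rintro l u rfl hl
    obtain ⟨β, hβ, hd⟩ := exists_midForm_derives hw hl
    exact .nonterminal_of_mem_rules (mem_leftQuotient_rules.2 ⟨r, hr, .mid r hβ⟩) hd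

end LeftQuotient

theorem language_leftQuotient [Finite σ] (g : ContextFreeGrammar A) (M : DFA A σ) :
    (g.leftQuotient M).language = {r | ∃ l ∈ M.accepts, l ++ r ∈ g.language} := by
  ext r
  constructor
  · intro h
    obtain ⟨l, hl, hacc⟩ := isRuleClosed_intended.mem_of_derives h
    exact ⟨l, hacc, hl⟩
  · rintro ⟨l, hacc, hl⟩
    exact ((isRuleClosed_simulated.mem_of_derives hl).2 M.start).2 l r rfl hacc

end ContextFreeGrammar

theorem leftQuotient_of_contextFree_regular_isContextFree_general
    {A : Type} (L R : Language A)
    (hL : L.IsContextFree) (hR : R.IsRegular) :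
    Language.IsContextFree {r : List A | ∃ l ∈ R, l ++ r ∈ L} := by
  obtain ⟨g, rfl⟩ := hL
  obtain ⟨σ, _, M, rfl⟩ := hR
  exact ⟨g.leftQuotient M, g.language_leftQuotient M⟩

/-- If `L` is a context-free language and `R` is a regular language over a finite
alphabet `A`, then the left quotient `R \ L = { r | ∃ l ∈ R, l ++ r ∈ L }`
is context-free. -/
theorem leftQuotient_of_contextFree_regular_isContextFree
    {A : Type} [Fintype A] (L R : Language A)
    (hL : L.IsContextFree) (hR : R.IsRegular) :
    Language.IsContextFree {r : List A | ∃ l ∈ R, l ++ r ∈ L} :=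
  leftQuotient_of_contextFree_regular_isContextFree_general L R hL hR
end

section
/- Given a CFG G in which every non-empty production is inhabited (its right-hand side derives at least one terminal string), and a string α of length i, run the Earley recognition algorithm on α producing charts c₀,…,cᵢ. Then there exists a string γ with α ++ γ ∈ L(G) if and only if chart cᵢ is non-empty. -/
/-!
Soundness: an item `[E → a • b (s)]` in chart `j` records a rule `E → a b` with
`a ⇒* w[s, j)` and a sentential form `S ⇒* w[0, s) E δ` whose tail `δ` derives a terminal
word. As every production is inhabited, `b` derives a terminal word too, so `w[0, j)` extends
to a sentence.

Completeness: following a parse of `α ++ γ` tree by tree, prediction, scanning and completion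
put the completed start item into the last chart of the input `α ++ γ`. Charts cannot skip a
position, since every item in chart `j + 1` goes back to a scan out of chart `j`, and the charts
up to `|α|` only read `α`.
-/

/-- An Earley item `[E → α • β (i)]`: nonterminal `lhs`, matched part `before`,
remaining part `after`, and span start index `start`. -/
structure EarleyItem (T N : Type) where
  lhs : N
  before : List (Symbol T N)
  after : List (Symbol T N)
  start : ℕ

/-- `EarleyInChart g w j it` means that running the Earley recognition algorithm
for grammar `g` on input `w` places item `it` in the chart at index `j`.
The four constructors are initialization and the predictor, scanner and
completer operations. -/
inductive EarleyInChart {T : Type} (g : ContextFreeGrammar T) (w : List T) :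
    ℕ → EarleyItem T g.NT → Prop
  | init (r : ContextFreeRule T g.NT) (hr : r ∈ g.rules) (hinit : r.input = g.initial) :
      EarleyInChart g w 0 ⟨g.initial, [], r.output, 0⟩
  | predict (j s : ℕ) (E A : g.NT) (a b : List (Symbol T g.NT))
      (h : EarleyInChart g w j ⟨E, a, Symbol.nonterminal A :: b, s⟩)
      (r : ContextFreeRule T g.NT) (hr : r ∈ g.rules) (hA : r.input = A) :
      EarleyInChart g w j ⟨A, [], r.output, j⟩
  | scan (j s : ℕ) (E : g.NT) (t : T) (a b : List (Symbol T g.NT))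
      (h : EarleyInChart g w j ⟨E, a, Symbol.terminal t :: b, s⟩)
      (ht : w[j]? = some t) :
      EarleyInChart g w (j + 1) ⟨E, a ++ [Symbol.terminal t], b, s⟩
  | complete (j s k : ℕ) (A E : g.NT) (a ν π : List (Symbol T g.NT))
      (hc : EarleyInChart g w j ⟨A, a, [], s⟩)
      (hp : EarleyInChart g w s ⟨E, ν, Symbol.nonterminal A :: π, k⟩) :
      EarleyInChart g w j ⟨E, ν ++ [Symbol.nonterminal A], π, k⟩

open ContextFreeGrammar

theorem List.drop_take_append_drop_take {α : Type*} (l : List α) {i j k : ℕ} (hij : i ≤ j)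
    (hjk : j ≤ k) : (l.take j).drop i ++ (l.take k).drop j = (l.take k).drop i := by
  apply List.ext_getElem?
  intro n
  simp only [List.getElem?_append, List.getElem?_take, List.getElem?_drop, List.length_drop,
    List.length_take]
  grind

namespace ContextFreeGrammar

variable {T : Type*} {g : ContextFreeGrammar T}

/-- Derivations of terminal words, organised as forests of parse trees read left to right;
equivalent to `g.Derives β (u.map Symbol.terminal)` but amenable to structural induction. -/
inductive Yields (g : ContextFreeGrammar T) : List (Symbol T g.NT) → List T → Prop
  | nil : Yields g [] []
  | terminal (t : T) {β : List (Symbol T g.NT)} {u : List T} :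
      Yields g β u → Yields g (.terminal t :: β) (t :: u)
  | nonterminal {r : ContextFreeRule T g.NT} (hr : r ∈ g.rules) {β : List (Symbol T g.NT)}
      {u v : List T} : Yields g r.output u → Yields g β v →
      Yields g (.nonterminal r.input :: β) (u ++ v)

theorem Yields.append {x y : List (Symbol T g.NT)} {u v : List T} (hx : g.Yields x u)
    (hy : g.Yields y v) : g.Yields (x ++ y) (u ++ v) := by
  induction hx with
  | nil => exact hy
  | terminal t _ ih => exact .terminal t ih
  | nonterminal hr hu _ _ ih => simpa using Yields.nonterminal hr hu ih

theorem Yields.exists_of_append {x y : List (Symbol T g.NT)} {w : List T}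
    (h : g.Yields (x ++ y) w) : ∃ u v, w = u ++ v ∧ g.Yields x u ∧ g.Yields y v := by
  induction x generalizing w with
  | nil => exact ⟨[], w, rfl, .nil, h⟩
  | cons s x ih =>
    cases h with
    | terminal t h =>
      obtain ⟨u, v, rfl, hu, hv⟩ := ih h
      exact ⟨t :: u, v, rfl, .terminal t hu, hv⟩
    | nonterminal hr hu h =>
      obtain ⟨u', v, rfl, hu', hv⟩ := ih h
      exact ⟨_ ++ u', v, by simp, .nonterminal hr hu hu', hv⟩

theorem Yields.of_rewrites {r : ContextFreeRule T g.NT} (hr : r ∈ g.rules)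
    {β β' : List (Symbol T g.NT)} {u : List T} (hrw : r.Rewrites β β') (h : g.Yields β' u) :
    g.Yields β u := by
  induction hrw generalizing u with
  | head s =>
    obtain ⟨u, v, rfl, hu, hv⟩ := h.exists_of_append
    exact .nonterminal hr hu hv
  | cons x _ ih =>
    cases h with
    | terminal t h => exact .terminal t (ih h)
    | nonterminal hr' hu h => exact .nonterminal hr' hu (ih h)

theorem yields_map_terminal (u : List T) : g.Yields (u.map Symbol.terminal) u := by
  induction u with
  | nil => exact .nil
  | cons t u ih => exact .terminal t ih

theorem Yields.derives {β : List (Symbol T g.NT)} {u : List T} (h : g.Yields β u) :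
    g.Derives β (u.map Symbol.terminal) := by
  induction h with
  | nil => exact .refl _
  | terminal t _ ih => exact ih.append_left [.terminal t]
  | @nonterminal r hr β u v _ _ ihu ihv =>
    have hstep : g.Produces (.nonterminal r.input :: β) (r.output ++ β) := ⟨r, hr, .head β⟩
    simpa using hstep.trans_derives ((ihu.append_right β).trans (ihv.append_left _))

theorem yields_iff_derives {β : List (Symbol T g.NT)} {u : List T} :
    g.Yields β u ↔ g.Derives β (u.map Symbol.terminal) := by
  refine ⟨Yields.derives, fun h => ?_⟩
  induction h using Relation.ReflTransGen.head_induction_on with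
  | refl => exact yields_map_terminal u
  | head hp _ ih =>
    obtain ⟨r, hr, hrw⟩ := hp
    exact ih.of_rewrites hr hrw

theorem Yields.exists_rule_of_singleton {A : g.NT} {u : List T}
    (h : g.Yields [.nonterminal A] u) : ∃ r ∈ g.rules, r.input = A ∧ g.Yields r.output u := by
  generalize hβ : [Symbol.nonterminal A] = β at h
  cases h with
  | nil => cases hβ
  | terminal => cases hβ
  | nonterminal hr hu hv =>
    obtain ⟨hA, rfl⟩ := List.cons.inj hβ
    cases hv
    exact ⟨_, hr, (Symbol.nonterminal.inj hA).symm, by simpa using hu⟩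

theorem produces_of_mem_rules {r : ContextFreeRule T g.NT} (hr : r ∈ g.rules)
    (p q : List (Symbol T g.NT)) :
    g.Produces (p ++ .nonterminal r.input :: q) (p ++ r.output ++ q) :=
  ⟨r, hr, by simpa using r.rewrites_of_exists_parts p q⟩

theorem exists_yields_of_output_eq_append
    (hinh : ∀ r ∈ g.rules, r.output ≠ [] →
      ∃ γ : List T, g.Derives r.output (γ.map Symbol.terminal))
    {r : ContextFreeRule T g.NT} (hr : r ∈ g.rules) {a b : List (Symbol T g.NT)}
    (hab : r.output = a ++ b) : ∃ v, g.Yields b v := by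
  by_cases hout : r.output = []
  · rw [hout, eq_comm, List.append_eq_nil_iff] at hab
    exact ⟨[], hab.2 ▸ .nil⟩
  · obtain ⟨γ, hγ⟩ := hinh r hr hout
    obtain ⟨-, v, -, -, hv⟩ := (hab ▸ yields_iff_derives.mpr hγ).exists_of_append
    exact ⟨v, hv⟩

end ContextFreeGrammar

namespace EarleyInChart

variable {T : Type} {g : ContextFreeGrammar T} {w : List T} {j : ℕ} {it : EarleyItem T g.NT}

theorem start_le (h : EarleyInChart g w j it) : it.start ≤ j := by
  induction h with
  | init => exact le_rfl
  | predict => exact le_rfl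
  | scan _ _ _ _ _ _ _ _ ih => exact ih.trans (Nat.le_succ _)
  | complete _ _ _ _ _ _ _ _ _ _ ihc ihp => exact ihp.trans ihc

theorem of_append {v : List T} (h : EarleyInChart g (w ++ v) j it) (hj : j ≤ w.length) :
    EarleyInChart g w j it := by
  induction h with
  | init r hr hinit => exact .init r hr hinit
  | predict j s E A a b _ r hr hA ih => exact .predict j s E A a b (ih hj) r hr hA
  | scan j s E t a b _ ht ih =>
    rw [List.getElem?_append_left (by omega)] at ht
    exact .scan j s E t a b (ih (by omega)) ht
  | complete j s k A E a ν π hc _ ihc ihp =>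
    exact .complete j s k A E a ν π (ihc hj) (ihp (hc.start_le.trans hj))

theorem nonempty_of_succ (h : EarleyInChart g w (j + 1) it) :
    ∃ it', EarleyInChart g w j it' := by
  generalize hk : j + 1 = k at h
  induction h generalizing j with
  | init => omega
  | predict _ _ _ _ _ _ _ _ _ _ ih => exact ih hk
  | scan j' _ _ _ _ _ h _ _ => exact ⟨_, (by omega : j' = j) ▸ h⟩
  | complete _ _ _ _ _ _ _ _ _ _ ihc _ => exact ihc hk

theorem nonempty_of_le {k : ℕ} (h : EarleyInChart g w k it) (hjk : j ≤ k) :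
    ∃ it', EarleyInChart g w j it' := by
  induction k, hjk using Nat.le_induction generalizing it with
  | base => exact ⟨it, h⟩
  | succ k _ ih =>
    obtain ⟨it', h'⟩ := h.nonempty_of_succ
    exact ih h'

theorem advance_of_yields {E : g.NT} {a β : List (Symbol T g.NT)} {s : ℕ} {u rest : List T}
    (h : EarleyInChart g w j ⟨E, a, β, s⟩) (hy : g.Yields β u) (hw : w.drop j = u ++ rest) :
    EarleyInChart g w (j + u.length) ⟨E, a ++ β, [], s⟩ := by
  induction hy generalizing E s j a rest with
  | nil => simpa using h
  | @terminal t β u _ ih =>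
    have ht : w[j]? = some t := by rw [← List.head?_drop, hw]; rfl
    have hw' : w.drop (j + 1) = u ++ rest := by rw [← List.tail_drop, hw]; rfl
    simpa [Nat.add_comm 1, Nat.add_assoc] using ih (.scan _ _ _ _ _ _ h ht) hw'
  | @nonterminal r hr β u v _ _ ihu ihv =>
    have hA := ihu (.predict _ _ _ _ _ _ h r hr rfl) (rest := v ++ rest) (by simpa using hw)
    have hw' : w.drop (j + u.length) = v ++ rest := by
      rw [← List.drop_drop, hw, List.append_assoc, List.drop_left]
    simpa [Nat.add_assoc] using ihv (.complete _ _ _ _ _ _ _ _ hA h) hw'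

theorem exists_rule (h : EarleyInChart g w j it) :
    ∃ r ∈ g.rules, r.input = it.lhs ∧ r.output = it.before ++ it.after := by
  induction h with
  | init r hr hinit => exact ⟨r, hr, hinit, rfl⟩
  | predict _ _ _ _ _ _ _ r hr hA => exact ⟨r, hr, hA, rfl⟩
  | scan _ _ _ _ _ _ _ _ ih => simpa using ih
  | complete _ _ _ _ _ _ _ _ _ _ _ ihp => simpa using ihp

theorem yields_before (h : EarleyInChart g w j it) :
    g.Yields it.before ((w.take j).drop it.start) := by
  induction h with
  | init => exact .nil
  | predict => simpa using Yields.nil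
  | scan j _ _ t _ _ h ht ih =>
    have hj : j < w.length := (List.getElem?_eq_some_iff.mp ht).1
    have hslice : (w.take (j + 1)).drop j = [t] := by
      rw [List.take_add_one, ht, Option.toList_some, List.drop_append, List.drop_eq_nil_of_le]
      · simp [hj.le]
      · simp
    have hsplit := w.drop_take_append_drop_take h.start_le j.le_succ
    rw [hslice] at hsplit
    simpa [← hsplit] using ih.append (.terminal t .nil)
  | complete j s _ A _ _ _ _ hc hp ihc ihp =>
    obtain ⟨r, hr, hA, hout⟩ := hc.exists_rule
    have hAy : g.Yields [.nonterminal A] ((w.take j).drop s) := by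
      simpa [hA] using Yields.nonterminal hr (by simpa [hout] using ihc) .nil
    simpa [← w.drop_take_append_drop_take hp.start_le hc.start_le] using ihp.append hAy

theorem derives_of_context {E : g.NT} {a b δ σ : List (Symbol T g.NT)} {s : ℕ}
    (h : EarleyInChart g w j ⟨E, a, b, s⟩)
    (hctx : g.Derives σ ((w.take s).map Symbol.terminal ++ .nonterminal E :: δ)) :
    g.Derives σ ((w.take j).map Symbol.terminal ++ b ++ δ) := by
  obtain ⟨r, hr, rfl, hout⟩ := h.exists_rule
  set p := (w.take s).map (Symbol.terminal (N := g.NT))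
  have hprefix : p ++ ((w.take j).drop s).map Symbol.terminal = (w.take j).map Symbol.terminal := by
    simpa [p] using congrArg (List.map Symbol.terminal)
      (w.drop_take_append_drop_take (Nat.zero_le s) h.start_le)
  have hexpand : g.Produces (p ++ .nonterminal r.input :: δ) (p ++ (a ++ (b ++ δ))) := by
    simpa [hout] using produces_of_mem_rules hr p δ
  have hbefore := (h.yields_before.derives.append_right (b ++ δ)).append_left p
  rw [← hprefix]
  simpa using (hctx.trans_produces hexpand).trans hbefore

theorem exists_context
    (hinh : ∀ r ∈ g.rules, r.output ≠ [] →
      ∃ γ : List T, g.Derives r.output (γ.map Symbol.terminal))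
    (h : EarleyInChart g w j it) :
    ∃ δ, g.Derives [.nonterminal g.initial]
        ((w.take it.start).map Symbol.terminal ++ .nonterminal it.lhs :: δ) ∧
      ∃ v, g.Yields δ v := by
  induction h with
  | init => exact ⟨[], by simpa using Derives.refl _, [], .nil⟩
  | predict _ _ _ A a b h _ _ _ ih =>
    obtain ⟨δ, hctx, v, hv⟩ := ih
    obtain ⟨r', hr', -, hout⟩ := h.exists_rule
    obtain ⟨u, hu⟩ := exists_yields_of_output_eq_append hinh hr'
      (b := b) (a := a ++ [.nonterminal A]) (by simpa using hout)
    exact ⟨b ++ δ, by simpa using h.derives_of_context hctx, u ++ v, hu.append hv⟩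
  | scan _ _ _ _ _ _ _ _ ih => exact ih
  | complete _ _ _ _ _ _ _ _ _ _ _ ihp => exact ihp

end EarleyInChart

/-- Given a CFG `g` in which every non-empty production is inhabited (its
right-hand side derives some terminal string), and a string `α` of length `i`,
there exists a string `γ` with `α ++ γ ∈ L(g)` iff the Earley chart at index
`i` is non-empty. -/
theorem earley_chart_nonempty_iff_extendable {T : Type} (g : ContextFreeGrammar T)
    (hinh : ∀ r ∈ g.rules, r.output ≠ [] →
      ∃ γ : List T, g.Derives r.output (γ.map Symbol.terminal))
    (α : List T) :
    (∃ γ : List T, α ++ γ ∈ g.language) ↔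
      ∃ it : EarleyItem T g.NT, EarleyInChart g α α.length it := by
  constructor
  · rintro ⟨γ, hγ⟩
    obtain ⟨r, hr, hS, hy⟩ := (yields_iff_derives.mpr hγ).exists_rule_of_singleton
    have hend := (EarleyInChart.init (w := α ++ γ) r hr hS).advance_of_yields hy
      (rest := []) (by simp)
    obtain ⟨it, hit⟩ := hend.nonempty_of_le (j := α.length) (by simp)
    exact ⟨it, hit.of_append le_rfl⟩
  · rintro ⟨⟨E, a, b, s⟩, hit⟩
    obtain ⟨r, hr, -, hout⟩ := hit.exists_rule
    obtain ⟨u, hu⟩ : ∃ u, g.Yields b u := exists_yields_of_output_eq_append hinh hr hout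
    obtain ⟨δ, hctx, v, hv⟩ := hit.exists_context hinh
    refine ⟨u ++ v, (mem_language_iff g _).mpr ?_⟩
    have hsentence := hit.derives_of_context hctx
    rw [List.take_length, List.append_assoc] at hsentence
    simpa using hsentence.trans (((hu.append hv).derives).append_left (α.map Symbol.terminal))
end
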